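/- The function u ↦ Im(u)⁴ / (|u|⁴ · |u − 1|⁴) is integrable on ℍ with respect to two-dimensional Lebesgue measure, and ∫_ℍ Im(u)⁴ / (|u|⁴ |u − 1|⁴) dA(u) = 3π/8. -/

import Mathlib

/-!
Fubini over the horizontal lines `Im u = a`. On each line the integrand
`x ↦ a⁴ / ((x² + a²)² ((x - 1)² + a²)²)` has an elementary primitive (partial fractions), odd about
`x = 1/2`, whose rational and logarithmic parts vanish at `±∞`; only its arctangent part survives,
so the line integral is `π a (1 + 20 a²) / (1 + 4 a²)³`. This has the primitive
`(π / 8) (2 / (1 + 4 a²)² - 5 / (1 + 4 a²))`, and integrating over `a > 0` gives `3π/8`.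
-/

open MeasureTheory Real Filter Topology Set

namespace Complex

theorem map_measurableEquivRealProd_restrict_im_pos :
    (volume.restrict {z : ℂ | 0 < z.im}).map measurableEquivRealProd =
      volume.prod (volume.restrict (Ioi 0)) := by
  have hpre : {z : ℂ | 0 < z.im} = measurableEquivRealProd ⁻¹' (univ ×ˢ Ioi 0) := by
    ext z; simp
  rw [hpre, ← measurableEquivRealProd.restrict_map, volume_preserving_equiv_real_prod.map_eq,
    Measure.volume_eq_prod, ← Measure.prod_restrict, Measure.restrict_univ]

theorem integrableOn_im_pos_iff {E : Type*} [NormedAddCommGroup E] (f : ℂ → E) :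
    IntegrableOn f {z | 0 < z.im} ↔
      Integrable (fun p : ℝ × ℝ => f ⟨p.1, p.2⟩) (volume.prod (volume.restrict (Ioi 0))) := by
  rw [← map_measurableEquivRealProd_restrict_im_pos, integrable_map_equiv]
  rfl

theorem setIntegral_im_pos {E : Type*} [NormedAddCommGroup E] [NormedSpace ℝ E] (f : ℂ → E) :
    ∫ z in {z | 0 < z.im}, f z =
      ∫ p : ℝ × ℝ, f ⟨p.1, p.2⟩ ∂(volume.prod (volume.restrict (Ioi 0))) := by
  rw [← map_measurableEquivRealProd_restrict_im_pos, integral_map_equiv]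
  rfl

end Complex

theorem tendsto_sub_sq_add_sq_atTop (a c : ℝ) :
    Tendsto (fun x : ℝ => (x - c) ^ 2 + a ^ 2) atTop atTop :=
  tendsto_atTop_add_const_right _ _
    ((tendsto_pow_atTop two_ne_zero).comp (tendsto_atTop_add_const_right _ (-c) tendsto_id))

theorem tendsto_div_sq_add_sq_atTop (a : ℝ) :
    Tendsto (fun x : ℝ => x / (x ^ 2 + a ^ 2)) atTop (𝓝 0) := by
  refine tendsto_of_tendsto_of_tendsto_of_le_of_le' tendsto_const_nhds tendsto_inv_atTop_zero
    ?_ ?_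
  · filter_upwards [eventually_ge_atTop 0] with x hx using by positivity
  · filter_upwards [eventually_gt_atTop 0] with x hx
    calc x / (x ^ 2 + a ^ 2) ≤ x / x ^ 2 :=
          div_le_div_of_nonneg_left hx.le (by positivity) (by nlinarith)
      _ = x⁻¹ := by field_simp

theorem tendsto_sub_div_sub_sq_add_sq_atTop (a c : ℝ) :
    Tendsto (fun x : ℝ => (x - c) / ((x - c) ^ 2 + a ^ 2)) atTop (𝓝 0) :=
  (tendsto_div_sq_add_sq_atTop a).comp (tendsto_atTop_add_const_right _ (-c) tendsto_id)

theorem tendsto_arctan_sub_div_atTop {a : ℝ} (ha : 0 < a) (c : ℝ) :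
    Tendsto (fun x : ℝ => arctan ((x - c) / a)) atTop (𝓝 (π / 2)) :=
  (tendsto_nhds_of_tendsto_nhdsWithin tendsto_arctan_atTop).comp
    ((tendsto_atTop_add_const_right _ (-c) tendsto_id).atTop_div_const ha)

theorem tendsto_log_sq_add_sq_sub_log_atTop (a : ℝ) :
    Tendsto (fun x : ℝ => log (x ^ 2 + a ^ 2) - log ((x - 1) ^ 2 + a ^ 2)) atTop (𝓝 0) := by
  have hratio : Tendsto (fun x : ℝ => 1 + 2 * ((x - 1) / ((x - 1) ^ 2 + a ^ 2))
      + 1 / ((x - 1) ^ 2 + a ^ 2)) atTop (𝓝 1) := by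
    simpa using (((tendsto_sub_div_sub_sq_add_sq_atTop a 1).const_mul 2).const_add 1).add
      (tendsto_const_nhds (x := (1 : ℝ)).div_atTop (tendsto_sub_sq_add_sq_atTop a 1))
  rw [← log_one]
  refine ((continuousAt_log one_ne_zero).tendsto.comp hratio).congr' ?_
  filter_upwards [eventually_gt_atTop 1] with x hx
  have hq₀ : 0 < x ^ 2 + a ^ 2 := by positivity
  have hq₁ : 0 < (x - 1) ^ 2 + a ^ 2 := by nlinarith
  rw [Function.comp_apply, ← log_div hq₀.ne' hq₁.ne']
  congr 1
  field_simp
  ring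

namespace TripodIntegral

noncomputable section

def integrand (x a : ℝ) : ℝ := a ^ 4 / ((x ^ 2 + a ^ 2) ^ 2 * ((x - 1) ^ 2 + a ^ 2) ^ 2)

theorem integrand_nonneg (x a : ℝ) : 0 ≤ integrand x a := by
  unfold integrand; positivity

theorem div_norm_pow_four_eq_integrand (x a : ℝ) :
    a ^ 4 / (‖(⟨x, a⟩ : ℂ)‖ ^ 4 * ‖(⟨x, a⟩ : ℂ) - 1‖ ^ 4) = integrand x a := by
  have norm_pow_four (x a : ℝ) : ‖(⟨x, a⟩ : ℂ)‖ ^ 4 = (x ^ 2 + a ^ 2) ^ 2 := by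
    rw [show 4 = 2 * 2 from rfl, pow_mul, Complex.sq_norm, Complex.normSq_mk]
    ring
  rw [show (⟨x, a⟩ : ℂ) - 1 = ⟨x - 1, a⟩ from Complex.ext (by simp) (by simp), norm_pow_four,
    norm_pow_four, integrand]

def integrandPrimitive (a x : ℝ) : ℝ :=
  a ^ 4 / (1 + 4 * a ^ 2) ^ 2 * (2 / ((x - 1) ^ 2 + a ^ 2) - 2 / (x ^ 2 + a ^ 2))
  + a ^ 2 * (1 - 4 * a ^ 2) / (2 * (1 + 4 * a ^ 2) ^ 2)
      * (x / (x ^ 2 + a ^ 2) + (x - 1) / ((x - 1) ^ 2 + a ^ 2))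
  + a * (1 + 20 * a ^ 2) / (2 * (1 + 4 * a ^ 2) ^ 3) * (arctan (x / a) + arctan ((x - 1) / a))
  + 2 * a ^ 4 * (4 * a ^ 2 + 5) / (1 + 4 * a ^ 2) ^ 3
      * (log (x ^ 2 + a ^ 2) - log ((x - 1) ^ 2 + a ^ 2))

theorem hasDerivAt_integrandPrimitive {a : ℝ} (ha : 0 < a) (x : ℝ) :
    HasDerivAt (integrandPrimitive a) (integrand x a) x := by
  have hq₀ : 0 < x ^ 2 + a ^ 2 := by positivity
  have hq₁ : 0 < (x - 1) ^ 2 + a ^ 2 := by positivity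
  have dx₁ : HasDerivAt (fun x : ℝ => x - 1) 1 x := (hasDerivAt_id x).sub_const 1
  have dq₀ : HasDerivAt (fun x : ℝ => x ^ 2 + a ^ 2) (2 * x) x := by
    simpa using ((hasDerivAt_id x).pow 2).add_const (a ^ 2)
  have dq₁ : HasDerivAt (fun x : ℝ => (x - 1) ^ 2 + a ^ 2) (2 * (x - 1)) x := by
    simpa using (dx₁.pow 2).add_const (a ^ 2)
  have d₁ := ((hasDerivAt_const x (2 : ℝ)).div dq₁ hq₁.ne').sub
    ((hasDerivAt_const x (2 : ℝ)).div dq₀ hq₀.ne')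
  have d₂ := ((hasDerivAt_id x).div dq₀ hq₀.ne').add (dx₁.div dq₁ hq₁.ne')
  have d₃ := ((hasDerivAt_arctan (x / a)).comp x ((hasDerivAt_id x).div_const a)).add
    ((hasDerivAt_arctan ((x - 1) / a)).comp x (dx₁.div_const a))
  have d₄ := (dq₀.log hq₀.ne').sub (dq₁.log hq₁.ne')
  refine ((((d₁.const_mul _).add (d₂.const_mul _)).add (d₃.const_mul _)).add
    (d₄.const_mul _)).congr_deriv ?_
  have harctan₀ : 1 + (x / a) ^ 2 = (x ^ 2 + a ^ 2) / a ^ 2 := by field_simp; ring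
  have harctan₁ : 1 + ((x - 1) / a) ^ 2 = ((x - 1) ^ 2 + a ^ 2) / a ^ 2 := by field_simp; ring
  simp only [id, harctan₀, harctan₁, integrand]
  field_simp
  ring

theorem integrandPrimitive_one_sub (a x : ℝ) :
    integrandPrimitive a (1 - x) = -integrandPrimitive a x := by
  have e₁ : (1 - x) ^ 2 + a ^ 2 = (x - 1) ^ 2 + a ^ 2 := by ring
  have e₂ : (1 - x - 1) ^ 2 + a ^ 2 = x ^ 2 + a ^ 2 := by ring
  have e₃ : (1 - x) / a = -((x - 1) / a) := by ring
  have e₄ : (1 - x - 1) / a = -(x / a) := by ring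
  simp only [integrandPrimitive, e₁, e₂, e₃, e₄, arctan_neg]
  ring

theorem tendsto_integrandPrimitive_atTop {a : ℝ} (ha : 0 < a) :
    Tendsto (integrandPrimitive a) atTop
      (𝓝 (a * (1 + 20 * a ^ 2) / (2 * (1 + 4 * a ^ 2) ^ 3) * π)) := by
  have t₁ : Tendsto (fun x : ℝ => 2 / ((x - 1) ^ 2 + a ^ 2) - 2 / (x ^ 2 + a ^ 2))
      atTop (𝓝 0) := by
    simpa using (tendsto_const_nhds.div_atTop (tendsto_sub_sq_add_sq_atTop a 1)).sub
      (tendsto_const_nhds.div_atTop (tendsto_sub_sq_add_sq_atTop a 0))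
  have t₂ : Tendsto (fun x : ℝ => x / (x ^ 2 + a ^ 2) + (x - 1) / ((x - 1) ^ 2 + a ^ 2))
      atTop (𝓝 0) := by
    simpa using (tendsto_div_sq_add_sq_atTop a).add (tendsto_sub_div_sub_sq_add_sq_atTop a 1)
  have t₃ : Tendsto (fun x : ℝ => arctan (x / a) + arctan ((x - 1) / a)) atTop
      (𝓝 (π / 2 + π / 2)) := by
    simpa using (tendsto_arctan_sub_div_atTop ha 0).add (tendsto_arctan_sub_div_atTop ha 1)
  unfold integrandPrimitive
  convert (((t₁.const_mul _).add (t₂.const_mul _)).add (t₃.const_mul _)).add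
    ((tendsto_log_sq_add_sq_sub_log_atTop a).const_mul _) using 2
  ring

theorem tendsto_integrandPrimitive_atBot {a : ℝ} (ha : 0 < a) :
    Tendsto (integrandPrimitive a) atBot
      (𝓝 (-(a * (1 + 20 * a ^ 2) / (2 * (1 + 4 * a ^ 2) ^ 3) * π))) := by
  have h : Tendsto (fun x : ℝ => 1 - x) atBot atTop :=
    tendsto_atTop_add_const_left _ 1 tendsto_neg_atBot_atTop
  simpa [Function.comp_def, integrandPrimitive_one_sub] using
    ((tendsto_integrandPrimitive_atTop ha).comp h).neg

theorem measurable_integrand : Measurable (Function.uncurry integrand) := by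
  unfold Function.uncurry integrand; fun_prop

theorem integrand_le {a : ℝ} (ha : 0 < a) (x : ℝ) :
    integrand x a ≤ (a ^ 4)⁻¹ * (1 + (x / a) ^ 2)⁻¹ := by
  have hq₀ : a ^ 2 ≤ x ^ 2 + a ^ 2 := by nlinarith
  have hq₁ : a ^ 2 ≤ (x - 1) ^ 2 + a ^ 2 := by nlinarith
  calc integrand x a ≤ a ^ 4 / ((x ^ 2 + a ^ 2) * a ^ 2 * (a ^ 2) ^ 2) := by
        refine div_le_div_of_nonneg_left (by positivity) (by positivity) ?_
        rw [sq (x ^ 2 + a ^ 2)]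
        gcongr
    _ = (a ^ 4)⁻¹ * (1 + (x / a) ^ 2)⁻¹ := by field_simp; ring

theorem integrable_integrand {a : ℝ} (ha : 0 < a) : Integrable (integrand · a) :=
  ((integrable_inv_one_add_sq.comp_div ha.ne').const_mul _).mono'
    (measurable_integrand.comp (measurable_id.prodMk measurable_const)).aestronglyMeasurable
    (ae_of_all _ fun x => (abs_of_nonneg (integrand_nonneg x a)).trans_le (integrand_le ha x))

def lineIntegral (a : ℝ) : ℝ := π * a * (1 + 20 * a ^ 2) / (1 + 4 * a ^ 2) ^ 3

theorem integral_integrand {a : ℝ} (ha : 0 < a) : ∫ x, integrand x a = lineIntegral a := by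
  rw [integral_of_hasDerivAt_of_tendsto (hasDerivAt_integrandPrimitive ha)
    (integrable_integrand ha) (tendsto_integrandPrimitive_atBot ha)
    (tendsto_integrandPrimitive_atTop ha), lineIntegral]
  field_simp
  ring

def lineIntegralPrimitive (a : ℝ) : ℝ := π / 8 * (2 / (1 + 4 * a ^ 2) ^ 2 - 5 / (1 + 4 * a ^ 2))

theorem hasDerivAt_lineIntegralPrimitive (a : ℝ) :
    HasDerivAt lineIntegralPrimitive (lineIntegral a) a := by
  have hq : 0 < 1 + 4 * a ^ 2 := by positivity
  have dq : HasDerivAt (fun a : ℝ => 1 + 4 * a ^ 2) (8 * a) a :=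
    (((hasDerivAt_pow 2 a).const_mul 4).const_add 1).congr_deriv (by norm_num; ring)
  refine ((((hasDerivAt_const a (2 : ℝ)).div (dq.pow 2) (pow_pos hq 2).ne').sub
    ((hasDerivAt_const a (5 : ℝ)).div dq hq.ne')).const_mul (π / 8)).congr_deriv ?_
  simp only [Pi.pow_apply, lineIntegral]
  field_simp
  ring

theorem tendsto_lineIntegralPrimitive_atTop : Tendsto lineIntegralPrimitive atTop (𝓝 0) := by
  have hq : Tendsto (fun a : ℝ => 1 + 4 * a ^ 2) atTop atTop :=
    tendsto_atTop_add_const_left _ 1 ((tendsto_pow_atTop two_ne_zero).const_mul_atTop four_pos)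
  unfold lineIntegralPrimitive
  simpa using ((tendsto_const_nhds.div_atTop ((tendsto_pow_atTop two_ne_zero).comp hq)).sub
    (tendsto_const_nhds.div_atTop hq)).const_mul (π / 8)

theorem lineIntegral_nonneg {a : ℝ} (ha : 0 ≤ a) : 0 ≤ lineIntegral a := by
  unfold lineIntegral; positivity

theorem integrableOn_lineIntegral : IntegrableOn lineIntegral (Ioi 0) :=
  integrableOn_Ioi_deriv_of_nonneg' (fun a _ => hasDerivAt_lineIntegralPrimitive a)
    (fun _ ha => lineIntegral_nonneg (le_of_lt ha)) tendsto_lineIntegralPrimitive_atTop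

theorem integral_lineIntegral : ∫ a in Ioi 0, lineIntegral a = 3 * π / 8 := by
  rw [integral_Ioi_of_hasDerivAt_of_nonneg' (fun a _ => hasDerivAt_lineIntegralPrimitive a)
    (fun _ ha => lineIntegral_nonneg (le_of_lt ha)) tendsto_lineIntegralPrimitive_atTop,
    lineIntegralPrimitive]
  ring

theorem integrable_integrand_prod :
    Integrable (Function.uncurry integrand) (volume.prod (volume.restrict (Ioi 0))) := by
  rw [integrable_prod_iff' measurable_integrand.aestronglyMeasurable]
  refine ⟨(ae_restrict_iff' measurableSet_Ioi).2 (ae_of_all _ fun _ => integrable_integrand),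
    integrableOn_lineIntegral.congr_fun (fun a ha => ?_) measurableSet_Ioi⟩
  simp only [Function.uncurry_apply_pair, norm_of_nonneg (integrand_nonneg _ _)]
  exact (integral_integrand ha).symm

theorem integral_integrand_prod :
    ∫ p, Function.uncurry integrand p ∂(volume.prod (volume.restrict (Ioi 0))) = 3 * π / 8 := by
  rw [integral_prod_symm _ integrable_integrand_prod, ← integral_lineIntegral]
  exact setIntegral_congr_fun measurableSet_Ioi fun a ha => integral_integrand ha

end

end TripodIntegral

theorem tripod_integral_normalized :
    IntegrableOn
      (fun u : ℂ => u.im ^ 4 / (‖u‖ ^ 4 * ‖u - 1‖ ^ 4))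
      {z : ℂ | 0 < z.im} volume ∧
    ∫ u in {z : ℂ | 0 < z.im},
        u.im ^ 4 / (‖u‖ ^ 4 * ‖u - 1‖ ^ 4) = 3 * π / 8 := by
  rw [Complex.integrableOn_im_pos_iff, Complex.setIntegral_im_pos]
  simp only [TripodIntegral.div_norm_pow_four_eq_integrand]
  exact ⟨TripodIntegral.integrable_integrand_prod, TripodIntegral.integral_integrand_prod⟩
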